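/- Let A be a symmetric n×n matrix over ℤ/4ℤ whose off-diagonal entries all lie in {0,1}. Let B be the n×n matrix over 𝔽₂ whose (i,j) entry is A_{ij} reduced modulo 2, and let r denote the rank of B over 𝔽₂. Define the complex Gauss sum S = Σ_{x ∈ {0,1}^n} i^{f(x)}, where f(x) = xᵀAx is evaluated in ℤ/4ℤ (with coordinates of x regarded as elements of ℤ/4ℤ) and i^{f(x)} means the complex unit i raised to a representative of f(x) in {0,1,2,3}. Then either S = 0 or |S|² = 2^{2n−r}. -/

import Mathlib

/-!
Write `Q x = x̃ᵀ A x̃` for the `0/1` lift `x̃` of `x ∈ 𝔽₂ⁿ`. As `A` is symmetric,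
`Q (x + y) = Q x + Q y + 2 x̃ᵀ A ỹ`, and `2 x̃ᵀ A ỹ` only depends on `xᵀ B y ∈ 𝔽₂`.
Expanding `S * conj S` and summing the sign character over `y` gives
`|S|² = 2ⁿ ∑_{z ∈ ker B} i^{Q z}`. On `ker B` the map `z ↦ i^{Q z}` is an additive character,
so the last sum is either `0` or `|ker B| = 2^{n - r}`.
-/

open Finset Matrix

noncomputable abbrev iChar : AddChar (ZMod 4) ℂ := AddChar.zmodChar 4 Complex.I_pow_four

noncomputable abbrev signChar : AddChar (ZMod 2) ℂ := AddChar.zmodChar 2 neg_one_sq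

abbrev mod2 : ZMod 4 →+* ZMod 2 := ZMod.castHom (by norm_num) (ZMod 2)

lemma iChar_two_mul (a : ZMod 4) : iChar (2 * a) = signChar (mod2 a) := by
  have hval : ∀ a : ZMod 4, (2 * a).val = 2 * (mod2 a).val := by decide
  rw [AddChar.zmodChar_apply, AddChar.zmodChar_apply, hval, pow_mul, Complex.I_sq]

lemma iChar_mul_conj (a : ZMod 4) : iChar a * starRingEnd ℂ (iChar a) = 1 := by
  rw [← AddChar.map_neg_eq_conj, ← AddChar.map_add_eq_mul, add_neg_cancel,
    AddChar.map_zero_eq_one]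

lemma signChar_eq_one_iff {t : ZMod 2} : signChar t = 1 ↔ t = 0 := by
  have hval : ∀ t : ZMod 2, t = 0 ∨ (t.val = 1 ∧ t ≠ 0) := by decide
  rcases hval t with rfl | ⟨h, ht⟩
  · simp
  · norm_num [AddChar.zmodChar_apply, h, ht]

lemma two_mul_eq_zero_of_mod2_eq_zero {a : ZMod 4} (ha : mod2 a = 0) : 2 * a = 0 := by
  revert a; decide

lemma natCard_ker_mulVecLin {K m n : Type*} [Field K] [Fintype K] [Fintype n]
    (B : Matrix m n K) :
    Nat.card (LinearMap.ker B.mulVecLin) = Fintype.card K ^ (Fintype.card n - B.rank) := by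
  classical
  have hrank := LinearMap.finrank_range_add_finrank_ker B.mulVecLin
  rw [Module.finrank_fintype_fun_eq_card] at hrank
  rw [Nat.card_eq_fintype_card, Module.card_eq_pow_finrank (K := K), Matrix.rank]
  congr 1
  omega

section

variable {ι : Type*}

def liftZeroOne (x : ι → ZMod 2) : ι → ZMod 4 := fun i => ((x i).val : ZMod 4)

lemma liftZeroOne_add (x y : ι → ZMod 2) :
    liftZeroOne (x + y) =
      liftZeroOne x + liftZeroOne y + 2 • (liftZeroOne x * liftZeroOne y) := by
  have key : ∀ s t : ZMod 2,
      (((s + t).val : ℕ) : ZMod 4) = s.val + t.val + 2 * (s.val * t.val) := by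
    decide
  funext i
  simpa [liftZeroOne] using key (x i) (y i)

lemma mod2_comp_liftZeroOne (x : ι → ZMod 2) : mod2 ∘ liftZeroOne x = x := by
  have key : ∀ t : ZMod 2, mod2 (t.val : ZMod 4) = t := by decide
  funext i
  exact key (x i)

@[simp]
lemma liftZeroOne_zero : liftZeroOne (0 : ι → ZMod 2) = 0 := by
  funext i
  simp [liftZeroOne]

variable [Fintype ι]

def quadForm (A : Matrix ι ι (ZMod 4)) (x : ι → ZMod 2) : ZMod 4 :=
  liftZeroOne x ⬝ᵥ A *ᵥ liftZeroOne x

lemma quadForm_eq_sum (A : Matrix ι ι (ZMod 4)) (x : ι → ZMod 2) :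
    quadForm A x = ∑ i, ∑ j, liftZeroOne x i * A i j * liftZeroOne x j := by
  simp only [quadForm, dotProduct, mulVec, mul_sum, mul_assoc]

lemma mod2_dotProduct_mulVec_liftZeroOne (A : Matrix ι ι (ZMod 4)) (x y : ι → ZMod 2) :
    mod2 (liftZeroOne x ⬝ᵥ A *ᵥ liftZeroOne y) = x ⬝ᵥ A.map mod2 *ᵥ y := by
  have hmul : mod2 ∘ (A *ᵥ liftZeroOne y) = A.map mod2 *ᵥ y := by
    funext i
    rw [Function.comp_apply, RingHom.map_mulVec, mod2_comp_liftZeroOne]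
  rw [RingHom.map_dotProduct, hmul, mod2_comp_liftZeroOne]

variable {A : Matrix ι ι (ZMod 4)}

lemma quadForm_add (hA : A.IsSymm) (x y : ι → ZMod 2) :
    quadForm A (x + y) =
      quadForm A x + quadForm A y + 2 * (liftZeroOne x ⬝ᵥ A *ᵥ liftZeroOne y) := by
  have hsymm : ∀ u v : ι → ZMod 4, u ⬝ᵥ A *ᵥ v = v ⬝ᵥ A *ᵥ u := fun u v => by
    rw [dotProduct_mulVec, ← mulVec_transpose, hA.eq, dotProduct_comm]
  have h4 : (4 : ZMod 4) = 0 := rfl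
  -- every term involving the correction `c` of `liftZeroOne_add` carries a factor `4`
  set a := liftZeroOne x
  set b := liftZeroOne y
  set c := a * b
  simp only [quadForm, liftZeroOne_add, add_dotProduct, smul_dotProduct, mulVec_add, mulVec_smul,
    dotProduct_add, dotProduct_smul]
  linear_combination hsymm b a + 2 * hsymm c a + 2 * hsymm c b +
    (a ⬝ᵥ A *ᵥ c + b ⬝ᵥ A *ᵥ c + c ⬝ᵥ A *ᵥ c) * h4

lemma iChar_quadForm_add (hA : A.IsSymm) (x y : ι → ZMod 2) :
    iChar (quadForm A (x + y)) =
      iChar (quadForm A x) * iChar (quadForm A y) * signChar (x ⬝ᵥ A.map mod2 *ᵥ y) := by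
  rw [quadForm_add hA, AddChar.map_add_eq_mul, AddChar.map_add_eq_mul, iChar_two_mul,
    mod2_dotProduct_mulVec_liftZeroOne]

lemma quadForm_add_of_mulVec_eq_zero (hA : A.IsSymm) {z₀ : ι → ZMod 2}
    (hz₀ : A.map mod2 *ᵥ z₀ = 0) (z : ι → ZMod 2) :
    quadForm A (z + z₀) = quadForm A z + quadForm A z₀ := by
  rw [quadForm_add hA, two_mul_eq_zero_of_mod2_eq_zero, add_zero]
  rw [mod2_dotProduct_mulVec_liftZeroOne, hz₀, dotProduct_zero]

noncomputable def quadCharOnKer (hA : A.IsSymm) :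
    AddChar (LinearMap.ker (A.map mod2).mulVecLin) ℂ where
  toFun z := iChar (quadForm A z)
  map_zero_eq_one' := by simp [quadForm]
  map_add_eq_mul' z z₀ := by
    rw [Submodule.coe_add, quadForm_add_of_mulVec_eq_zero hA z₀.2, AddChar.map_add_eq_mul]

variable [DecidableEq ι]

lemma sum_signChar_dotProduct (w : ι → ZMod 2) :
    ∑ y, signChar (w ⬝ᵥ y) = if w = 0 then (2 : ℂ) ^ Fintype.card ι else 0 := by
  classical
  let ψ := signChar.compAddMonoidHom (AddMonoidHom.mk' (w ⬝ᵥ ·) (dotProduct_add w))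
  have hψ : ψ = 0 ↔ w = 0 := by
    refine ⟨fun h => funext fun i => ?_, fun h => by subst h; ext y; simp [ψ]⟩
    simpa [ψ, signChar_eq_one_iff] using AddChar.eq_zero_iff.mp h (Pi.single i 1)
  calc ∑ y, signChar (w ⬝ᵥ y) = ∑ y, ψ y := rfl
  _ = if ψ = 0 then (Fintype.card (ι → ZMod 2) : ℂ) else 0 := AddChar.sum_eq_ite ψ
  _ = _ := by simp only [hψ, Fintype.card_fun, ZMod.card, Nat.cast_pow, Nat.cast_ofNat]

noncomputable def quadGaussSum (A : Matrix ι ι (ZMod 4)) : ℂ := ∑ x, iChar (quadForm A x)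

lemma quadGaussSum_mul_conj (hA : A.IsSymm) :
    quadGaussSum A * starRingEnd ℂ (quadGaussSum A) =
      2 ^ Fintype.card ι * ∑ z with A.map mod2 *ᵥ z = 0, iChar (quadForm A z) := by
  set B := A.map mod2
  have hB : B.IsSymm := hA.map mod2
  calc quadGaussSum A * starRingEnd ℂ (quadGaussSum A)
      = ∑ y, ∑ x, iChar (quadForm A x) * starRingEnd ℂ (iChar (quadForm A y)) := by
        rw [quadGaussSum, map_sum, sum_mul_sum, sum_comm]
    _ = ∑ y, ∑ z, iChar (quadForm A (z + y)) * starRingEnd ℂ (iChar (quadForm A y)) :=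
        sum_congr rfl fun y _ => (Fintype.sum_equiv (Equiv.addRight y) _ _ fun _ => rfl).symm
    _ = ∑ y, ∑ z, iChar (quadForm A z) * signChar ((B *ᵥ z) ⬝ᵥ y) := by
        refine sum_congr rfl fun y _ => sum_congr rfl fun z _ => ?_
        rw [iChar_quadForm_add hA, dotProduct_mulVec, ← mulVec_transpose, hB.eq]
        linear_combination
          iChar (quadForm A z) * signChar ((B *ᵥ z) ⬝ᵥ y) * iChar_mul_conj (quadForm A y)
    _ = ∑ z, iChar (quadForm A z) * if B *ᵥ z = 0 then (2 : ℂ) ^ Fintype.card ι else 0 := by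
        simp only [sum_comm (γ := ι → ZMod 2), ← mul_sum, sum_signChar_dotProduct]
    _ = _ := by
        rw [sum_filter, mul_sum]
        exact sum_congr rfl fun z _ => by split_ifs <;> ring

lemma sum_ker_iChar_quadForm (hA : A.IsSymm) :
    ∑ z with A.map mod2 *ᵥ z = 0, iChar (quadForm A z) = 0 ∨
      ∑ z with A.map mod2 *ᵥ z = 0, iChar (quadForm A z) =
        2 ^ (Fintype.card ι - (A.map mod2).rank) := by
  classical
  rw [sum_subtype (p := (· ∈ LinearMap.ker (A.map mod2).mulVecLin)) _
    (by simp [LinearMap.mem_ker])]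
  change ∑ z, quadCharOnKer hA z = 0 ∨ ∑ z, quadCharOnKer hA z = _
  rw [AddChar.sum_eq_ite, ← Nat.card_eq_fintype_card, natCard_ker_mulVecLin, ZMod.card]
  split_ifs <;> simp

theorem quadGaussSum_eq_zero_or (hA : A.IsSymm) :
    quadGaussSum A = 0 ∨
      ‖quadGaussSum A‖ ^ 2 = 2 ^ (2 * Fintype.card ι - (A.map mod2).rank) := by
  have hnorm : ((‖quadGaussSum A‖ ^ 2 : ℝ) : ℂ) =
      2 ^ Fintype.card ι * ∑ z with A.map mod2 *ᵥ z = 0, iChar (quadForm A z) := by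
    rw [← quadGaussSum_mul_conj hA, Complex.mul_conj, Complex.sq_norm]
  have hrank := (A.map mod2).rank_le_card_width
  rcases sum_ker_iChar_quadForm hA with h | h
  · left
    rw [h, mul_zero] at hnorm
    exact norm_eq_zero.mp (pow_eq_zero_iff two_ne_zero |>.mp (by exact_mod_cast hnorm))
  · right
    rw [h, ← pow_add, show Fintype.card ι + (Fintype.card ι - (A.map mod2).rank) =
      2 * Fintype.card ι - (A.map mod2).rank by omega] at hnorm
    exact_mod_cast hnorm

end

theorem stmt_4 (n : ℕ) (A : Matrix (Fin n) (Fin n) (ZMod 4)) (hA : A.IsSymm)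
    (B : Matrix (Fin n) (Fin n) (ZMod 2))
    (hB : ∀ i j, B i j = ZMod.castHom (show (2:ℕ) ∣ 4 by norm_num) (ZMod 2) (A i j))
    (r : ℕ) (hr : r = B.rank)
    (f : (Fin n → Fin 2) → ZMod 4)
    (hf : ∀ x, f x = ∑ i, ∑ j, ((x i : ℕ) : ZMod 4) * A i j * ((x j : ℕ) : ZMod 4))
    (S : ℂ) (hS : S = ∑ x : Fin n → Fin 2, Complex.I ^ (f x).val) :
    S = 0 ∨ ‖S‖ ^ 2 = 2 ^ (2 * n - r) := by
  have hB' : B = A.map mod2 := Matrix.ext hB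
  have hS' : S = quadGaussSum A := by
    rw [hS, quadGaussSum]
    refine Fintype.sum_congr _ _ fun x => ?_
    rw [AddChar.zmodChar_apply, hf]
    exact congrArg (fun a : ZMod 4 => Complex.I ^ a.val) (quadForm_eq_sum A x).symm
  subst hS' hB' hr
  simpa using quadGaussSum_eq_zero_or hA
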